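/- arXiv:2201.06084 — 7 statements merged into one kernel-verified Lean document; each statement's English description precedes it below -/
import Mathlib

section
/- Let e be a finite set with positive weights γ, and consider the star graph on vertex set e ∪ {v_e} where each v ∈ e is joined to the auxiliary vertex v_e by an edge of weight γ(v). Then for every S ⊆ e, the minimum over T ⊆ e ∪ {v_e} with T ∩ e = S of the cut weight of T equals min{γ(S), γ(e \ S)}. -/
/-!
In the star, the edge to `v ∈ e` is cut exactly when `v` and the centre `u` lie on different
sides of `T`. So a cut with `u ∉ T` costs `γ(T ∩ e)`, one with `u ∈ T` costs `γ(e \ T)`, and once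
`T ∩ e = S` is fixed the only remaining choice is the side of `u`.
-/

open Finset

theorem sum_starCut_eq {V : Type*} [DecidableEq V] (e T : Finset V) (γ : V → ℝ) (u : V) :
    ∑ v ∈ e, (if (v ∈ T ∧ u ∉ T) ∨ (u ∈ T ∧ v ∉ T) then γ v else 0) =
      if u ∈ T then ∑ v ∈ e \ T, γ v else ∑ v ∈ e ∩ T, γ v := by
  split_ifs with hu
  · simp only [hu, not_true, and_false, true_and, false_or]
    rw [← sum_filter, filter_notMem_eq_sdiff]
  · simp only [hu, not_false_eq_true, and_true, false_and, or_false]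
    rw [← sum_filter, filter_mem_eq_inter]

theorem sum_starCut_eq_of_inter_eq {V : Type*} [DecidableEq V] {e S T : Finset V} (γ : V → ℝ)
    (u : V) (hTS : T ∩ e = S) :
    ∑ v ∈ e, (if (v ∈ T ∧ u ∉ T) ∨ (u ∈ T ∧ v ∉ T) then γ v else 0) =
      if u ∈ T then ∑ v ∈ e \ S, γ v else ∑ v ∈ S, γ v := by
  rw [sum_starCut_eq, ← hTS, sdiff_inter_self_right, inter_comm]

theorem stmt6_general {V : Type*} [DecidableEq V] (e : Finset V) (γ : V → ℝ)
    (u : V) (hu : u ∉ e) :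
    ∀ S ⊆ e,
      IsLeast
        {x : ℝ | ∃ T : Finset V, T ⊆ insert u e ∧ T ∩ e = S ∧
          x = ∑ v ∈ e, (if (v ∈ T ∧ u ∉ T) ∨ (u ∈ T ∧ v ∉ T) then γ v else 0)}
        (min (∑ v ∈ S, γ v) (∑ v ∈ e \ S, γ v)) := by
  intro S hS
  have hSe : S ∩ e = S := inter_eq_left.2 hS
  have huS : u ∉ S := fun h => hu (hS h)
  refine ⟨?_, ?_⟩
  · rcases le_total (∑ v ∈ S, γ v) (∑ v ∈ e \ S, γ v) with h | h
    · refine ⟨S, hS.trans (subset_insert u e), hSe, ?_⟩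
      rw [sum_starCut_eq_of_inter_eq γ u hSe, if_neg huS, min_eq_left h]
    · have hTS : insert u S ∩ e = S := by rw [insert_inter_of_notMem hu, hSe]
      refine ⟨insert u S, insert_subset_insert u hS, hTS, ?_⟩
      rw [sum_starCut_eq_of_inter_eq γ u hTS, if_pos (mem_insert_self u S), min_eq_right h]
  · rintro x ⟨T, -, hTS, rfl⟩
    rw [sum_starCut_eq_of_inter_eq γ u hTS]
    split_ifs
    exacts [min_le_right _ _, min_le_left _ _]

theorem stmt6 {V : Type*} [DecidableEq V] (e : Finset V) (γ : V → ℝ)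
    (hγ : ∀ v ∈ e, 0 < γ v) (u : V) (hu : u ∉ e) :
    ∀ S ⊆ e,
      IsLeast
        {x : ℝ | ∃ T : Finset V, T ⊆ insert u e ∧ T ∩ e = S ∧
          x = ∑ v ∈ e, (if (v ∈ T ∧ u ∉ T) ∨ (u ∈ T ∧ v ∉ T) then γ v else 0)}
        (min (∑ v ∈ S, γ v) (∑ v ∈ e \ S, γ v)) :=
  stmt6_general e γ u hu
end

section
/- Let e be a finite set with positive weights γ and b > 0. Consider the directed graph on vertex set e ∪ {e', e''} with, for each v ∈ e, a directed edge of weight γ(v) from v to e' and a directed edge of weight γ(v) from e'' to v, plus a directed edge of weight b from e' to e''. Then for every S ⊆ e, the minimum over T with T ∩ e = S of the directed cut weight (sum of weights of edges from T to its complement) equals min{γ(S), γ(e \ S), b}. -/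
/-!
A cut `T` with `T ∩ e = S` is determined by whether it contains `e'` and `e''`. If it avoids
`e'`, all edges from `S` to `e'` are cut; if it contains `e''`, all edges from `e''` to `e \ S`
are cut; if it contains `e'` but not `e''`, the edge `e' → e''` is cut. So each of the four
choices costs at least one of `γ(S)`, `γ(e \ S)`, `b`, and the cuts `S`, `S ∪ {e', e''}` and
`S ∪ {e'}` cost exactly these.
-/

open Finset

section CutWeight

variable {V M : Type*} [DecidableEq V]

section AddCommMonoid

variable [AddCommMonoid M] {e S T : Finset V} {γ : V → M} {p q : V}

/-- `p` and `q` play `e'` and `e''`; the terms count the edges `v → e'`, `e'' → v` and `e' → e''`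
leaving `T`. -/
def cutWeight (e : Finset V) (γ : V → M) (b : M) (p q : V) (T : Finset V) : M :=
  (∑ v ∈ e, ((if v ∈ T ∧ p ∉ T then γ v else 0) +
      (if q ∈ T ∧ v ∉ T then γ v else 0))) +
    (if p ∈ T ∧ q ∉ T then b else 0)

lemma sum_ite_mem_and_notMem_eq (hTS : T ∩ e = S) :
    ∑ v ∈ e, (if v ∈ T ∧ p ∉ T then γ v else 0) =
      if p ∈ T then 0 else ∑ v ∈ S, γ v := by
  split_ifs with hp
  · simp [hp]
  · simp only [hp, not_false_eq_true, and_true]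
    rw [sum_ite_mem, inter_comm, hTS]

lemma sum_ite_mem_and_notMem_eq_sdiff (hTS : T ∩ e = S) :
    ∑ v ∈ e, (if q ∈ T ∧ v ∉ T then γ v else 0) =
      if q ∈ T then ∑ v ∈ e \ S, γ v else 0 := by
  split_ifs with hq
  · simp only [hq, true_and]
    rw [sum_ite, sum_const_zero, add_zero, ← hTS, sdiff_inter_self_right,
      filter_notMem_eq_sdiff]
  · simp [hq]

lemma cutWeight_eq_of_inter_eq (b : M) (hTS : T ∩ e = S) :
    cutWeight e γ b p q T =
      (if p ∈ T then 0 else ∑ v ∈ S, γ v) + (if q ∈ T then ∑ v ∈ e \ S, γ v else 0) +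
        (if p ∈ T ∧ q ∉ T then b else 0) := by
  rw [cutWeight, sum_add_distrib, sum_ite_mem_and_notMem_eq hTS,
    sum_ite_mem_and_notMem_eq_sdiff hTS]

end AddCommMonoid

variable {e S T : Finset V} {γ : V → ℝ} {p q : V}

lemma min_le_cutWeight (b : ℝ) (hγ : ∀ v ∈ e, 0 ≤ γ v) (hTS : T ∩ e = S) :
    min (min (∑ v ∈ S, γ v) (∑ v ∈ e \ S, γ v)) b ≤ cutWeight e γ b p q T := by
  have hS : 0 ≤ ∑ v ∈ e \ S, γ v := sum_nonneg fun v hv => hγ v (mem_sdiff.1 hv).1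
  have h₁ := min_le_left (min (∑ v ∈ S, γ v) (∑ v ∈ e \ S, γ v)) b
  have h₂ := min_le_right (min (∑ v ∈ S, γ v) (∑ v ∈ e \ S, γ v)) b
  have h₃ := min_le_left (∑ v ∈ S, γ v) (∑ v ∈ e \ S, γ v)
  have h₄ := min_le_right (∑ v ∈ S, γ v) (∑ v ∈ e \ S, γ v)
  rw [cutWeight_eq_of_inter_eq b hTS]
  by_cases hp : p ∈ T <;> by_cases hq : q ∈ T <;>
    simp only [hp, hq, if_true, if_false, not_true_eq_false, not_false_eq_true, and_true,
      and_false] <;> linarith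

lemma exists_cutWeight_eq_min (b : ℝ) (hS : S ⊆ e) (hp : p ∉ e) (hq : q ∉ e)
    (hpq : p ≠ q) :
    ∃ T ⊆ insert p (insert q e), T ∩ e = S ∧
      cutWeight e γ b p q T = min (min (∑ v ∈ S, γ v) (∑ v ∈ e \ S, γ v)) b := by
  have hSe : S ∩ e = S := inter_eq_left.2 hS
  have hpS : p ∉ S := fun h => hp (hS h)
  have hqS : q ∉ S := fun h => hq (hS h)
  have hpqS : q ∉ insert p S := by simp [hpq.symm, hqS]
  have sub : insert p (insert q S) ⊆ insert p (insert q e) :=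
    insert_subset_insert _ (insert_subset_insert _ hS)
  rcases min_choice (min (∑ v ∈ S, γ v) (∑ v ∈ e \ S, γ v)) b with h | h <;> rw [h]
  · rcases min_choice (∑ v ∈ S, γ v) (∑ v ∈ e \ S, γ v) with h | h <;> rw [h]
    · refine ⟨S, hS.trans ((subset_insert _ _).trans (subset_insert _ _)), hSe, ?_⟩
      simp [cutWeight_eq_of_inter_eq b hSe, hpS, hqS]
    · have hT : insert p (insert q S) ∩ e = S := by
        rw [insert_inter_of_notMem hp, insert_inter_of_notMem hq, hSe]
      refine ⟨_, sub, hT, ?_⟩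
      simp [cutWeight_eq_of_inter_eq b hT]
  · have hT : insert p S ∩ e = S := by rw [insert_inter_of_notMem hp, hSe]
    refine ⟨insert p S, (insert_subset_insert _ (subset_insert _ _)).trans sub, hT, ?_⟩
    simp [cutWeight_eq_of_inter_eq b hT, hpqS]

end CutWeight

theorem stmt7_general {V : Type*} [DecidableEq V] (e : Finset V) (γ : V → ℝ)
    (hγ : ∀ v ∈ e, 0 < γ v) (b : ℝ)
    (p q : V) (hp : p ∉ e) (hq : q ∉ e) (hpq : p ≠ q) :
    ∀ S ⊆ e,
      IsLeast
        {x : ℝ | ∃ T : Finset V, T ⊆ insert p (insert q e) ∧ T ∩ e = S ∧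
          x = (∑ v ∈ e, ((if v ∈ T ∧ p ∉ T then γ v else 0) +
                (if q ∈ T ∧ v ∉ T then γ v else 0))) +
              (if p ∈ T ∧ q ∉ T then b else 0)}
        (min (min (∑ v ∈ S, γ v) (∑ v ∈ e \ S, γ v)) b) := by
  intro S hS
  refine ⟨?_, ?_⟩
  · obtain ⟨T, hTsub, hTS, hT⟩ := exists_cutWeight_eq_min b hS hp hq hpq (γ := γ)
    exact ⟨T, hTsub, hTS, hT.symm⟩
  · rintro x ⟨T, -, hTS, rfl⟩
    exact min_le_cutWeight b (fun v hv => (hγ v hv).le) hTS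

theorem stmt7 {V : Type*} [DecidableEq V] (e : Finset V) (γ : V → ℝ)
    (hγ : ∀ v ∈ e, 0 < γ v) (b : ℝ) (hb : 0 < b)
    (p q : V) (hp : p ∉ e) (hq : q ∉ e) (hpq : p ≠ q) :
    ∀ S ⊆ e,
      IsLeast
        {x : ℝ | ∃ T : Finset V, T ⊆ insert p (insert q e) ∧ T ∩ e = S ∧
          x = (∑ v ∈ e, ((if v ∈ T ∧ p ∉ T then γ v else 0) +
                (if q ∈ T ∧ v ∉ T then γ v else 0))) +
              (if p ∈ T ∧ q ∉ T then b else 0)}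
        (min (min (∑ v ∈ S, γ v) (∑ v ∈ e \ S, γ v)) b) :=
  stmt7_general e γ hγ b p q hp hq hpq
end

section
/- Let e be a finite set with positive weights γ and a, b > 0. Consider the directed graph on vertex set e ∪ {v_e} with, for each v ∈ e, a directed edge of weight a·γ(v) from v to v_e and a directed edge of weight b·γ(v) from v_e to v. Then for every S ⊆ e, the minimum over T with T ∩ e = S of the directed cut weight equals min{a·γ(S), b·γ(e \ S)}. -/
/-!
Only the side of the cut on which `v_e` lies matters: if `v_e ∉ T`, exactly the edges `v → v_e`
with `v ∈ S` are cut, of total weight `a·γ(S)`; if `v_e ∈ T`, exactly the edges `v_e → v` with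
`v ∈ e \ S` are cut, of total weight `b·γ(e \ S)`. Both choices are available for every `S`.
-/

open Finset

namespace StarCut

variable {V : Type*} [DecidableEq V] (e : Finset V) (γ : V → ℝ) (a b : ℝ) (u : V)

/-- Directed cut weight of `T`; the centre `u` is the paper's `v_e`. -/
def weight (T : Finset V) : ℝ :=
  ∑ v ∈ e, ((if v ∈ T ∧ u ∉ T then a * γ v else 0) + (if u ∈ T ∧ v ∉ T then b * γ v else 0))

variable {e γ a b u}

lemma weight_of_notMem {T : Finset V} (huT : u ∉ T) :
    weight e γ a b u T = a * ∑ v ∈ T ∩ e, γ v := by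
  simp only [weight, huT, not_false_eq_true, and_true, false_and, if_false, add_zero]
  rw [sum_ite_mem, inter_comm, mul_sum]

lemma weight_of_mem {T : Finset V} (huT : u ∈ T) :
    weight e γ a b u T = b * ∑ v ∈ e \ T, γ v := by
  simp only [weight, huT, not_true_eq_false, and_false, true_and, if_false, zero_add]
  rw [← sum_filter, ← sdiff_eq_filter, mul_sum]

end StarCut

open StarCut in
theorem stmt8_general {V : Type*} [DecidableEq V] (e : Finset V) (γ : V → ℝ)
    (a b : ℝ)
    (u : V) (hu : u ∉ e) :
    ∀ S ⊆ e,
      IsLeast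
        {x : ℝ | ∃ T : Finset V, T ⊆ insert u e ∧ T ∩ e = S ∧
          x = ∑ v ∈ e, ((if v ∈ T ∧ u ∉ T then a * γ v else 0) +
                (if u ∈ T ∧ v ∉ T then b * γ v else 0))}
        (min (a * ∑ v ∈ S, γ v) (b * ∑ v ∈ e \ S, γ v)) := by
  intro S hS
  have huS : u ∉ S := fun h => hu (hS h)
  refine ⟨?_, ?_⟩
  · rcases le_total (a * ∑ v ∈ S, γ v) (b * ∑ v ∈ e \ S, γ v) with h | h
    · refine ⟨S, hS.trans (subset_insert u e), inter_eq_left.mpr hS, ?_⟩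
      rw [min_eq_left h, ← weight, weight_of_notMem huS, inter_eq_left.mpr hS]
    · have hSe : insert u S ∩ e = S := by rw [insert_inter_of_notMem hu, inter_eq_left.mpr hS]
      refine ⟨insert u S, insert_subset_insert u hS, hSe, ?_⟩
      rw [min_eq_right h, ← weight, weight_of_mem (mem_insert_self u S),
        ← sdiff_inter_self_right e (insert u S), hSe]
  · rintro _ ⟨T, -, rfl, rfl⟩
    rw [← weight]
    by_cases huT : u ∈ T
    · rw [weight_of_mem huT, sdiff_inter_self_right]
      exact min_le_right _ _
    · rw [weight_of_notMem huT]
      exact min_le_left _ _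

theorem stmt8 {V : Type*} [DecidableEq V] (e : Finset V) (γ : V → ℝ)
    (hγ : ∀ v ∈ e, 0 < γ v) (a b : ℝ) (ha : 0 < a) (hb : 0 < b)
    (u : V) (hu : u ∉ e) :
    ∀ S ⊆ e,
      IsLeast
        {x : ℝ | ∃ T : Finset V, T ⊆ insert u e ∧ T ∩ e = S ∧
          x = ∑ v ∈ e, ((if v ∈ T ∧ u ∉ T then a * γ v else 0) +
                (if u ∈ T ∧ v ∉ T then b * γ v else 0))}
        (min (a * ∑ v ∈ S, γ v) (b * ∑ v ∈ e \ S, γ v)) :=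
  stmt8_general e γ a b u hu
end

section
/- Let g : [0, M] → ℝ be concave with g(0) = 0, and let 0 = b0 < b1 < ... < br ≤ M. If the vector a = B⁻¹ · (g(b1), ..., g(br))ᵀ, where B is the matrix with B_{ij} = b_{min(i,j)}, then all entries of a are nonnegative if and only if g(b_i) ≥ ((b_{i+1}-b_i)/(b_{i+1}-b_{i-1}))·g(b_{i-1}) + ((b_i-b_{i-1})/(b_{i+1}-b_{i-1}))·g(b_{i+1}) for i = 1, ..., r-1, and g(b_r) ≥ g(b_{r-1}). In particular, both conditions hold when g is concave with g(0)=0 and is nondecreasing on [b_{r-1}, b_r]. -/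
/-!
With `Δₖ = b (k + 1) - b k` and `L` the lower-triangular all-ones matrix, the min-matrix factors
as `B = L · diag Δ · Lᵀ`; hence `det B = ∏ Δₖ ≠ 0`, and inverting the three factors is summation
by parts: `B⁻¹ (g b₁, …, g b_r)` has entries `sⱼ - sⱼ₊₁`, where `sⱼ` is the slope of the chord of
`g` over `[bⱼ, bⱼ₊₁]` and `s_r = 0`. Concavity makes the chord slopes decrease (this is also the
three-point inequality), so every entry is nonnegative iff the last one, `s_{r-1}`, is, i.e. iff
`g b_{r-1} ≤ g b_r`.
-/

open Finset Matrix

section MinMatrix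

variable {K : Type*} [Field K]

def minMatrix (r : ℕ) (b : ℕ → K) : Matrix (Fin r) (Fin r) K :=
  of fun i j => b (min (i : ℕ) j + 1)

def lowerOnes (r : ℕ) : Matrix (Fin r) (Fin r) K :=
  of fun i j => if (j : ℕ) ≤ i then 1 else 0

def chordSlope (r : ℕ) (b y : ℕ → K) (j : ℕ) : K :=
  if j < r then (y (j + 1) - y j) / (b (j + 1) - b j) else 0

lemma Fin.sum_ite_val {M : Type*} [AddCommMonoid M] {r : ℕ} (p : ℕ → Prop) [DecidablePred p]
    (w : ℕ → M) : ∑ k : Fin r, (if p k then w k else 0) = ∑ k ∈ (range r).filter p, w k := by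
  rw [Fin.sum_univ_eq_sum_range (fun k => if p k then w k else 0), sum_filter]

variable {r : ℕ} {b y : ℕ → K}

lemma lowerOnes_mulVec (w : ℕ → K) (i : Fin r) :
    (lowerOnes r *ᵥ fun j => w j) i = ∑ k ∈ range (i + 1), w k := by
  simp only [lowerOnes, mulVec, dotProduct, of_apply, ite_mul, one_mul, zero_mul]
  rw [Fin.sum_ite_val (· ≤ (i : ℕ)) w]
  congr 1
  ext k
  simp only [mem_filter, mem_range]
  omega

lemma lowerOnes_transpose_mulVec (w : ℕ → K) (i : Fin r) :
    ((lowerOnes r)ᵀ *ᵥ fun j => w j) i = ∑ k ∈ Ico (i : ℕ) r, w k := by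
  simp only [lowerOnes, mulVec, dotProduct, transpose_apply, of_apply, ite_mul, one_mul, zero_mul]
  rw [Fin.sum_ite_val ((i : ℕ) ≤ ·) w]
  congr 1
  ext k
  simp only [mem_filter, mem_range, mem_Ico]
  omega

lemma det_lowerOnes : (lowerOnes r : Matrix (Fin r) (Fin r) K).det = 1 := by
  have h : (lowerOnes r : Matrix (Fin r) (Fin r) K).IsLowerTriangular :=
    fun i j hij => if_neg (not_le.mpr hij)
  rw [det_of_isLowerTriangular _ h]
  simp [lowerOnes]

lemma minMatrix_eq_lowerOnes_mul (hb0 : b 0 = 0) :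
    minMatrix r b =
      lowerOnes r * diagonal (fun k : Fin r => b (k + 1) - b k) * (lowerOnes r)ᵀ := by
  ext i j
  simp only [minMatrix, lowerOnes, mul_apply, diagonal_apply, transpose_apply, of_apply,
    mul_ite, ite_mul, mul_one, one_mul, mul_zero, zero_mul, sum_ite_eq', mem_univ, if_true]
  simp only [← ite_and]
  rw [Fin.sum_ite_val (fun k => k ≤ (j : ℕ) ∧ k ≤ (i : ℕ)) fun k => b (k + 1) - b k]
  have hfilter : (range r).filter (fun k => k ≤ (j : ℕ) ∧ k ≤ (i : ℕ)) =
      range (min (i : ℕ) j + 1) := by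
    ext k
    simp only [mem_filter, mem_range]
    omega
  rw [hfilter, sum_range_sub, hb0, sub_zero]

lemma det_minMatrix (hb0 : b 0 = 0) :
    (minMatrix r b).det = ∏ k : Fin r, (b (k + 1) - b k) := by
  rw [minMatrix_eq_lowerOnes_mul hb0, det_mul, det_mul, det_transpose, det_lowerOnes, det_diagonal,
    one_mul, mul_one]

lemma chordSlope_of_le {j : ℕ} (b y : ℕ → K) (h : r ≤ j) : chordSlope r b y j = 0 :=
  if_neg (not_lt.mpr h)

lemma sub_mul_chordSlope {j : ℕ} (y : ℕ → K) (hj : j < r) (hb : b j ≠ b (j + 1)) :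
    (b (j + 1) - b j) * chordSlope r b y j = y (j + 1) - y j := by
  rw [chordSlope, if_pos hj, mul_div_cancel₀ _ (sub_ne_zero.mpr hb.symm)]

lemma minMatrix_mulVec_chordSlope_sub (hb0 : b 0 = 0) (hy0 : y 0 = 0)
    (hb : ∀ j < r, b j ≠ b (j + 1)) :
    minMatrix r b *ᵥ (fun j : Fin r => chordSlope r b y j - chordSlope r b y (j + 1)) =
      fun i : Fin r => y (i + 1) := by
  set s := chordSlope r b y
  have hLt : (lowerOnes r)ᵀ *ᵥ (fun j : Fin r => s j - s (j + 1)) = fun j : Fin r => s j := by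
    ext i
    rw [lowerOnes_transpose_mulVec (fun j => s j - s (j + 1)), sum_Ico_eq_sub _ i.isLt.le,
      sum_range_sub', sum_range_sub', show s r = 0 from chordSlope_of_le b y le_rfl]
    ring
  have hD : diagonal (fun k : Fin r => b (k + 1) - b k) *ᵥ (fun j : Fin r => s j) =
      fun j : Fin r => y (j + 1) - y j := by
    ext j
    rw [mulVec_diagonal]
    exact sub_mul_chordSlope y j.isLt (hb j j.isLt)
  ext i
  rw [minMatrix_eq_lowerOnes_mul hb0, ← mulVec_mulVec, ← mulVec_mulVec, hLt, hD,
    lowerOnes_mulVec (fun j => y (j + 1) - y j), sum_range_sub, hy0, sub_zero]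

lemma inv_minMatrix_mulVec (hb0 : b 0 = 0) (hy0 : y 0 = 0) (hb : ∀ j < r, b j ≠ b (j + 1)) :
    (minMatrix r b)⁻¹ *ᵥ (fun i : Fin r => y (i + 1)) =
      fun j : Fin r => chordSlope r b y j - chordSlope r b y (j + 1) := by
  have hdet : IsUnit (minMatrix r b).det := by
    rw [det_minMatrix hb0, isUnit_iff_ne_zero, prod_ne_zero_iff]
    exact fun k _ => sub_ne_zero.mpr (hb k k.isLt).symm
  have := invertibleOfIsUnitDet _ hdet
  exact inv_mulVec_eq_vec (minMatrix_mulVec_chordSlope_sub hb0 hy0 hb).symm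

end MinMatrix

section Concave

variable {𝕜 : Type*} [Field 𝕜] [LinearOrder 𝕜] [IsStrictOrderedRing 𝕜] {s : Set 𝕜} {f : 𝕜 → 𝕜}

lemma ConcaveOn.secant_le (hf : ConcaveOn 𝕜 s f) {x y z : 𝕜} (hx : x ∈ s) (hz : z ∈ s)
    (hxy : x < y) (hyz : y < z) :
    (z - y) / (z - x) * f x + (y - x) / (z - x) * f z ≤ f y := by
  have hxz : 0 < z - x := by linarith
  have hcomb : (z - y) / (z - x) * x + (y - x) / (z - x) * z = y := by
    field_simp
    ring
  have key := hf.2 hx hz (div_nonneg (sub_nonneg.2 hyz.le) hxz.le)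
    (div_nonneg (sub_nonneg.2 hxy.le) hxz.le) (by field_simp; ring)
  rwa [smul_eq_mul, smul_eq_mul, smul_eq_mul, smul_eq_mul, hcomb] at key

variable {r : ℕ} {b : ℕ → 𝕜}

lemma ConcaveOn.chordSlope_succ_le (hf : ConcaveOn 𝕜 s f) (hs : ∀ i ≤ r, b i ∈ s)
    (hb : ∀ i < r, b i < b (i + 1)) {j : ℕ} (hj : j + 2 ≤ r) :
    chordSlope r b (f ∘ b) (j + 1) ≤ chordSlope r b (f ∘ b) j := by
  rw [chordSlope, chordSlope, if_pos (by omega), if_pos (by omega)]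
  exact hf.slope_anti_adjacent (hs j (by omega)) (hs (j + 2) hj) (hb j (by omega))
    (hb (j + 1) (by omega))

lemma ConcaveOn.chordSlope_sub_nonneg_iff (hf : ConcaveOn 𝕜 s f) (hs : ∀ i ≤ r, b i ∈ s)
    (hb : ∀ i < r, b i < b (i + 1)) :
    (∀ j : Fin r, 0 ≤ chordSlope r b (f ∘ b) j - chordSlope r b (f ∘ b) (j + 1)) ↔
      f (b (r - 1)) ≤ f (b r) := by
  cases r with
  | zero => simp
  | succ n =>
    have hpos : 0 < b (n + 1) - b n := sub_pos.2 (hb n n.lt_succ_self)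
    have hlast : chordSlope (n + 1) b (f ∘ b) n - chordSlope (n + 1) b (f ∘ b) (n + 1) =
        (f (b (n + 1)) - f (b n)) / (b (n + 1) - b n) := by
      rw [chordSlope_of_le b _ le_rfl, sub_zero, chordSlope, if_pos n.lt_succ_self]
      rfl
    rw [Nat.add_sub_cancel]
    constructor
    · intro h
      have hn := h (Fin.last n)
      rwa [Fin.val_last, hlast, le_div_iff₀ hpos, zero_mul, sub_nonneg] at hn
    · intro h j
      rcases (Nat.lt_succ_iff.1 j.isLt).lt_or_eq with hj | hj
      · exact sub_nonneg.2 (hf.chordSlope_succ_le hs hb (by omega))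
      · rw [hj, hlast]
        exact div_nonneg (sub_nonneg.2 h) hpos.le

end Concave

theorem stmt10_general (r : ℕ) (M : ℝ) (g : ℝ → ℝ)
    (hconc : ConcaveOn ℝ (Set.Icc 0 M) g) (hg0 : g 0 = 0)
    (b : ℕ → ℝ) (hb0 : b 0 = 0) (hmono : ∀ i < r, b i < b (i + 1)) (hbM : b r ≤ M) :
    let B : Matrix (Fin r) (Fin r) ℝ := fun i j => b (min i.val j.val + 1)
    let a : Fin r → ℝ := Matrix.mulVec B⁻¹ (fun i => g (b (i.val + 1)))
    ((∀ i, 0 ≤ a i) ↔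
      ((∀ i, 1 ≤ i → i < r →
          (b (i + 1) - b i) / (b (i + 1) - b (i - 1)) * g (b (i - 1)) +
            (b i - b (i - 1)) / (b (i + 1) - b (i - 1)) * g (b (i + 1)) ≤ g (b i)) ∧
        g (b (r - 1)) ≤ g (b r))) ∧
    (MonotoneOn g (Set.Icc (b (r - 1)) (b r)) →
      ((∀ i, 1 ≤ i → i < r →
          (b (i + 1) - b i) / (b (i + 1) - b (i - 1)) * g (b (i - 1)) +
            (b i - b (i - 1)) / (b (i + 1) - b (i - 1)) * g (b (i + 1)) ≤ g (b i)) ∧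
        g (b (r - 1)) ≤ g (b r))) := by
  intro B a
  have hb : MonotoneOn b (Set.Iic r) := (strictMonoOn_Iic_of_lt_succ hmono).monotoneOn
  have hmem : ∀ i ≤ r, b i ∈ Set.Icc 0 M := fun i hi =>
    ⟨hb0 ▸ hb (Nat.zero_le r) hi (Nat.zero_le i), (hb hi Set.self_mem_Iic hi).trans hbM⟩
  have hsecant : ∀ i, 1 ≤ i → i < r →
      (b (i + 1) - b i) / (b (i + 1) - b (i - 1)) * g (b (i - 1)) +
        (b i - b (i - 1)) / (b (i + 1) - b (i - 1)) * g (b (i + 1)) ≤ g (b i) := by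
    intro i hi hir
    obtain ⟨k, rfl⟩ := Nat.exists_eq_add_of_le' hi
    rw [Nat.add_sub_cancel]
    exact hconc.secant_le (hmem k (by omega)) (hmem (k + 1 + 1) hir) (hmono k (by omega))
      (hmono (k + 1) hir)
  have ha : a = fun j : Fin r => chordSlope r b (g ∘ b) j - chordSlope r b (g ∘ b) (j + 1) :=
    inv_minMatrix_mulVec (y := g ∘ b) hb0 (by rw [Function.comp_apply, hb0, hg0])
      fun j hj => (hmono j hj).ne
  have hlast : b (r - 1) ≤ b r := hb (Nat.sub_le r 1) Set.self_mem_Iic (Nat.sub_le r 1)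
  refine ⟨?_, fun hmon => ⟨hsecant, hmon ⟨le_rfl, hlast⟩ ⟨hlast, le_rfl⟩ hlast⟩⟩
  rw [and_iff_right hsecant, ha]
  exact hconc.chordSlope_sub_nonneg_iff hmem hmono

theorem stmt10 (r : ℕ) (hr : 2 ≤ r) (M : ℝ) (g : ℝ → ℝ)
    (hconc : ConcaveOn ℝ (Set.Icc 0 M) g) (hg0 : g 0 = 0)
    (b : ℕ → ℝ) (hb0 : b 0 = 0) (hmono : ∀ i < r, b i < b (i + 1)) (hbM : b r ≤ M) :
    let B : Matrix (Fin r) (Fin r) ℝ := fun i j => b (min i.val j.val + 1)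
    let a : Fin r → ℝ := Matrix.mulVec B⁻¹ (fun i => g (b (i.val + 1)))
    ((∀ i, 0 ≤ a i) ↔
      ((∀ i, 1 ≤ i → i < r →
          (b (i + 1) - b i) / (b (i + 1) - b (i - 1)) * g (b (i - 1)) +
            (b i - b (i - 1)) / (b (i + 1) - b (i - 1)) * g (b (i + 1)) ≤ g (b i)) ∧
        g (b (r - 1)) ≤ g (b r))) ∧
    (MonotoneOn g (Set.Icc (b (r - 1)) (b r)) →
      ((∀ i, 1 ≤ i → i < r →
          (b (i + 1) - b i) / (b (i + 1) - b (i - 1)) * g (b (i - 1)) +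
            (b i - b (i - 1)) / (b (i + 1) - b (i - 1)) * g (b (i + 1)) ≤ g (b i)) ∧
        g (b (r - 1)) ≤ g (b r))) :=
  stmt10_general r M g hconc hg0 b hb0 hmono hbM
end

section
/- Let e be a finite set with positive weights γ, let g : [0, γ(e)] → ℝ≥0 be concave and symmetric about γ(e)/2 with g(0) = 0, and let w(S) = g(γ(S)). Let Q = {γ(S) : S ⊆ e, 0 < γ(S) ≤ γ(e)/2} with r = |Q|. Then there exist nonnegative coefficients a1, ..., ar and the distinct values b1 < ... < br of Q such that w(S) = Σ_{i=1}^r a_i · min{γ(S), γ(e \ S), b_i} for every S ⊆ e. -/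
theorem stmt11 {V : Type*} [DecidableEq V] (e : Finset V) (γ : V → ℝ)
    (hγ : ∀ v ∈ e, 0 < γ v) (g : ℝ → ℝ)
    (hconc : ConcaveOn ℝ (Set.Icc 0 (∑ v ∈ e, γ v)) g)
    (hnn : ∀ x ∈ Set.Icc 0 (∑ v ∈ e, γ v), 0 ≤ g x)
    (hsym : ∀ x ∈ Set.Icc 0 (∑ v ∈ e, γ v), g x = g ((∑ v ∈ e, γ v) - x))
    (hg0 : g 0 = 0) :
    let Q : Finset ℝ := (e.powerset.image fun S => ∑ v ∈ S, γ v).filter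
      fun x => 0 < x ∧ x ≤ (∑ v ∈ e, γ v) / 2
    ∃ b : Fin Q.card → ℝ, StrictMono b ∧ (∀ i, b i ∈ Q) ∧
      ∃ a : Fin Q.card → ℝ, (∀ i, 0 ≤ a i) ∧
        ∀ S ⊆ e, g (∑ v ∈ S, γ v) =
          ∑ i, a i * min (min (∑ v ∈ S, γ v) (∑ v ∈ e \ S, γ v)) (b i) := by
  intro Q
  set T : ℝ := ∑ v ∈ e, γ v with hTdef
  have hT0 : 0 ≤ T := Finset.sum_nonneg fun v hv => (hγ v hv).le
  set r := Q.card with hr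
  -- enumeration of Q
  let obi := Q.orderIsoOfFin rfl
  set b : Fin r → ℝ := fun i => (obi i : ℝ) with hbdef
  have hbmono : StrictMono b := fun i j h => obi.strictMono h
  have hbQ : ∀ i, b i ∈ Q := fun i => (obi i).2
  have hQprop : ∀ x ∈ Q, 0 < x ∧ x ≤ T / 2 := by
    intro x hx
    exact (Finset.mem_filter.mp hx).2
  -- the extended sequence c
  set c : ℕ → ℝ := fun j => if h : 1 ≤ j ∧ j ≤ r then b ⟨j - 1, by omega⟩ else 0 with hcdef
  have hc0 : c 0 = 0 := by simp [hcdef]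
  have hcb : ∀ (j : ℕ) (h : 1 ≤ j ∧ j ≤ r), c j = b ⟨j - 1, by omega⟩ := by
    intro j h
    simp [hcdef, h]
  have hcQ : ∀ j, 1 ≤ j → j ≤ r → c j ∈ Q := by
    intro j h1 h2
    rw [hcb j ⟨h1, h2⟩]
    exact hbQ _
  have hcIcc : ∀ j ≤ r, 0 ≤ c j ∧ c j ≤ T / 2 := by
    intro j hj
    rcases Nat.eq_zero_or_pos j with h | h
    · subst h; rw [hc0]; constructor <;> linarith
    · have := hQprop _ (hcQ j h hj)
      exact ⟨this.1.le, this.2⟩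
  have hcmono : ∀ j k, j < k → k ≤ r → c j < c k := by
    intro j k hjk hk
    rcases Nat.eq_zero_or_pos j with h | h
    · subst h; rw [hc0]
      exact (hQprop _ (hcQ k hjk hk)).1
    · rw [hcb j ⟨h, by omega⟩, hcb k ⟨by omega, hk⟩]
      exact hbmono (by simp [Fin.lt_def]; omega)
  have hcT : ∀ j ≤ r, c j ∈ Set.Icc (0:ℝ) T := by
    intro j hj
    obtain ⟨h1, h2⟩ := hcIcc j hj
    exact ⟨h1, by linarith⟩
  -- monotonicity of g on [0, T/2]
  have hgmono : ∀ x y : ℝ, 0 ≤ x → x ≤ y → y ≤ T / 2 → g x ≤ g y := by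
    intro x y hx hxy hy
    have hxT : x ∈ Set.Icc (0:ℝ) T := ⟨hx, by linarith⟩
    have hTx : T - x ∈ Set.Icc (0:ℝ) T := ⟨by linarith, by linarith⟩
    have hseg : y ∈ Set.Icc x (T - x) := ⟨hxy, by linarith⟩
    have := hconc.min_le_of_mem_segment hxT hTx
      (by rw [segment_eq_Icc (by linarith : x ≤ T - x)]; exact hseg)
    rw [← hsym x hxT, min_self] at this
    exact this
  -- slopes
  set s : ℕ → ℝ := fun j => (g (c j) - g (c (j - 1))) / (c j - c (j - 1)) with hsdef
  have hs_nonneg : ∀ j, 1 ≤ j → j ≤ r → 0 ≤ s j := by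
    intro j h1 h2
    have hlt : c (j - 1) < c j := hcmono _ _ (by omega) h2
    have hle : g (c (j - 1)) ≤ g (c j) :=
      hgmono _ _ (hcIcc _ (by omega)).1 hlt.le (hcIcc _ h2).2
    exact div_nonneg (by linarith) (by linarith)
  have hs_anti : ∀ j, 1 ≤ j → j + 1 ≤ r → s (j + 1) ≤ s j := by
    intro j h1 h2
    have h01 : c (j - 1) < c j := hcmono _ _ (by omega) (by omega)
    have h12 : c j < c (j + 1) := hcmono _ _ (by omega) h2
    have := hconc.slope_anti_adjacent (hcT (j - 1) (by omega)) (hcT (j + 1) h2) h01 h12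
    simpa [hsdef, Nat.add_sub_cancel] using this
  -- coefficients
  set A : ℕ → ℝ := fun i => if i + 1 = r then s r else s (i + 1) - s (i + 2) with hAdef
  have hA_nonneg : ∀ i < r, 0 ≤ A i := by
    intro i hi
    by_cases h : i + 1 = r
    · simp only [hAdef, h, if_pos rfl]
      exact hs_nonneg r (by omega) le_rfl
    · simp only [hAdef, if_neg h]
      have := hs_anti (i + 1) (by omega) (by omega)
      linarith
  -- tail sums
  have htail : ∀ d j, j + d + 1 = r → ∑ i ∈ Finset.Ico j r, A i = s (j + 1) := by
    intro d
    induction d with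
    | zero =>
      intro j hj
      have : Finset.Ico j r = {j} := by
        rw [show r = j + 1 by omega, Finset.Ico_add_one_right_eq_Icc, Finset.Icc_self]
      rw [this, Finset.sum_singleton]
      show A j = s (j + 1)
      simp only [hAdef]
      rw [if_pos (show j + 1 = r by omega), show r = j + 1 by omega]
    | succ d ih =>
      intro j hj
      rw [Finset.sum_eq_sum_Ico_succ_bot (by omega : j < r)]
      rw [ih (j + 1) (by omega)]
      simp only [hAdef, if_neg (show ¬ j + 1 = r by omega)]
      ring
  -- main identity at the grid points
  have hmain : ∀ j ≤ r, ∑ i ∈ Finset.range r, A i * min (c j) (c (i + 1)) = g (c j) := by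
    intro j
    induction j with
    | zero =>
      intro _
      rw [hc0, hg0]
      apply Finset.sum_eq_zero
      intro i hi
      rw [Finset.mem_range] at hi
      have : c (i + 1) > 0 := (hQprop _ (hcQ (i + 1) (by omega) (by omega))).1
      rw [min_eq_left this.le, mul_zero]
    | succ j ih =>
      intro hj1
      have hjr : j ≤ r := by omega
      have hcc : c j < c (j + 1) := hcmono _ _ (by omega) hj1
      have key : ∀ i ∈ Finset.range r,
          A i * min (c (j + 1)) (c (i + 1)) =
          A i * min (c j) (c (i + 1)) +
            (if j ≤ i then A i * (c (j + 1) - c j) else 0) := by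
        intro i hi
        rw [Finset.mem_range] at hi
        by_cases h : j ≤ i
        · have h1 : c (j + 1) ≤ c (i + 1) := by
            rcases Nat.eq_or_lt_of_le h with h' | h'
            · subst h'; rfl
            · exact (hcmono _ _ (by omega) (by omega)).le
          have h2 : c j ≤ c (i + 1) := by linarith
          rw [min_eq_left h1, min_eq_left h2, if_pos h]
          ring
        · have h1 : c (i + 1) ≤ c j := by
            rcases Nat.eq_or_lt_of_le (show i + 1 ≤ j by omega) with h' | h'
            · rw [h']
            · exact (hcmono _ _ h' hjr).le
          have h2 : c (i + 1) ≤ c (j + 1) := by linarith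
          rw [min_eq_right h1, min_eq_right h2, if_neg h]
          ring
      rw [Finset.sum_congr rfl key, Finset.sum_add_distrib, ih hjr]
      have hsplit : ∑ i ∈ Finset.range r,
          (if j ≤ i then A i * (c (j + 1) - c j) else 0) =
          (∑ i ∈ Finset.Ico j r, A i) * (c (j + 1) - c j) := by
        rw [Finset.range_eq_Ico, ← Finset.sum_Ico_consecutive _ (Nat.zero_le j) (by omega : j ≤ r)]
        rw [Finset.sum_mul]
        have h1 : ∑ i ∈ Finset.Ico 0 j, (if j ≤ i then A i * (c (j + 1) - c j) else 0) = 0 := by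
          apply Finset.sum_eq_zero
          intro i hi
          rw [Finset.mem_Ico] at hi
          rw [if_neg (by omega)]
        have h2 : ∀ i ∈ Finset.Ico j r,
            (if j ≤ i then A i * (c (j + 1) - c j) else 0) = A i * (c (j + 1) - c j) := by
          intro i hi
          rw [Finset.mem_Ico] at hi
          rw [if_pos hi.1]
        rw [h1, Finset.sum_congr rfl h2]
        ring
      rw [hsplit, htail (r - j - 1) j (by omega)]
      have : s (j + 1) * (c (j + 1) - c j) = g (c (j + 1)) - g (c j) := by
        simp only [hsdef, Nat.add_sub_cancel]
        exact div_mul_cancel₀ _ (sub_ne_zero_of_ne hcc.ne')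
      linarith
  -- identity for any m that is 0 or in Q
  have hQform : ∀ m : ℝ, (m = 0 ∨ m ∈ Q) →
      ∑ i ∈ Finset.range r, A i * min m (c (i + 1)) = g m := by
    intro m hm
    rcases hm with hm | hm
    · subst hm
      rw [← hc0]
      exact hmain 0 (Nat.zero_le r)
    · obtain ⟨i, hi⟩ := obi.surjective ⟨m, hm⟩
      have hbi : b i = m := by rw [hbdef]; exact congrArg Subtype.val hi
      have hcm : c (i.1 + 1) = m := by
        rw [hcb (i.1 + 1) ⟨by omega, by omega⟩]
        simpa using hbi
      rw [← hcm]
      exact hmain (i.1 + 1) (by omega)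
  -- assemble the answer
  refine ⟨b, hbmono, hbQ, fun i => A i.1, fun i => hA_nonneg i.1 i.2, ?_⟩
  intro S hS
  have hxT : ∑ v ∈ S, γ v ≤ T := by
    apply Finset.sum_le_sum_of_subset_of_nonneg hS
    intro v hv _
    exact (hγ v hv).le
  have hx0 : 0 ≤ ∑ v ∈ S, γ v :=
    Finset.sum_nonneg fun v hv => (hγ v (hS hv)).le
  have hsdiff : ∑ v ∈ e \ S, γ v = T - ∑ v ∈ S, γ v := by
    rw [hTdef, ← Finset.sum_sdiff hS]
    ring
  set x : ℝ := ∑ v ∈ S, γ v with hxdef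
  set m : ℝ := min x (T - x) with hmdef
  have hm0 : 0 ≤ m := le_min hx0 (by linarith)
  have hmhalf : m ≤ T / 2 := by
    rcases le_total x (T - x) with h | h
    · rw [hmdef, min_eq_left h]; linarith
    · rw [hmdef, min_eq_right h]; linarith
  have hgm : g x = g m := by
    rcases le_total x (T - x) with h | h
    · rw [hmdef, min_eq_left h]
    · rw [hmdef, min_eq_right h]
      exact hsym x ⟨hx0, hxT⟩
  have hmem : m = 0 ∨ m ∈ Q := by
    rcases eq_or_lt_of_le hm0 with h | h
    · exact Or.inl h.symm
    · right
      rw [Finset.mem_filter]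
      constructor
      · rw [Finset.mem_image]
        rcases le_total x (T - x) with hc | hc
        · exact ⟨S, Finset.mem_powerset.mpr hS, by rw [hmdef, min_eq_left hc]⟩
        · refine ⟨e \ S, Finset.mem_powerset.mpr (Finset.sdiff_subset), ?_⟩
          rw [hsdiff, hmdef, min_eq_right hc]
      · exact ⟨h, hmhalf⟩
  have hsum : ∀ i : Fin r, A i.1 * min (min x (∑ v ∈ e \ S, γ v)) (b i) =
      A i.1 * min m (c (i.1 + 1)) := by
    intro i
    rw [hsdiff, ← hmdef, hcb (i.1 + 1) ⟨by omega, by omega⟩]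
    have : (⟨i.1 + 1 - 1, by omega⟩ : Fin r) = i := Fin.ext (by simp)
    rw [this]
  calc g x = g m := hgm
    _ = ∑ i ∈ Finset.range r, A i * min m (c (i + 1)) := (hQform m hmem).symm
    _ = ∑ i : Fin r, A i.1 * min m (c (i.1 + 1)) :=
        (Fin.sum_univ_eq_sum_range (fun i => A i * min m (c (i + 1))) r).symm
    _ = ∑ i : Fin r, A i.1 * min (min x (∑ v ∈ e \ S, γ v)) (b i) :=
        Finset.sum_congr rfl fun i _ => (hsum i).symm
end

section
/- Let e be a finite set with positive weights γ, let g : [0, γ(e)] → ℝ≥0 be concave with g(0) = g(γ(e)) = 0, and let w(S) = g(γ(S)). Let Q = {γ(S) : ∅ ⊂ S ⊂ e} with distinct values b1 < ... < br. Then there exist nonnegative coefficients a1, ..., ar such that w(S) = Σ_{i=1}^r a_i · min{(γ(e) - b_i)·γ(S), b_i·γ(e \ S)} for every S ⊆ e. -/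
/-!
At the breakpoints `0 < b₁ < ⋯ < b_r < T` and at `T`, `g` coincides with the hinge sum
`g 0 + σ x + ∑ aᵢ min x bᵢ`, where `aᵢ` is the drop of slope of `g` at `bᵢ`, nonnegative by
concavity, and `σ` is the last slope. When `g 0 = g T = 0`, evaluating at `T` gives
`σ T = -∑ aᵢ bᵢ`, and substituting turns each hinge into a tent, since
`T min x c - c x = min ((T - c) x) (c (T - x))`.
-/

open Finset

namespace ConcaveOn

/-- The expansion is built by adding breakpoints from left to right; the bound on the slopes to
the right of `t` is what makes the next coefficient nonnegative. -/
theorem exists_hinge_expansion {g : ℝ → ℝ} {U : ℝ} (hg : ConcaveOn ℝ (Set.Icc 0 U) g)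
    (Q : Finset ℝ) {t : ℝ} (ht0 : 0 < t) (htU : t ≤ U) (hQt : (Q : Set ℝ) ⊆ Set.Ioo 0 t) :
    ∃ (a : ℝ → ℝ) (σ : ℝ), (∀ c ∈ Q, 0 ≤ a c) ∧
      (∀ x ∈ insert t Q, g x = g 0 + σ * x + ∑ c ∈ Q, a c * min x c) ∧
      ∀ z ∈ Set.Ioc t U, (g z - g t) / (z - t) ≤ σ := by
  induction Q using Finset.induction_on_max generalizing t with
  | empty =>
    refine ⟨0, (g t - g 0) / (t - 0), by simp, fun x hx => ?_, fun z hz => ?_⟩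
    · obtain rfl : x = t := by simpa using hx
      rw [sub_zero, div_mul_cancel₀ _ ht0.ne']
      ring
    · exact hg.slope_anti_adjacent ⟨le_rfl, ht0.le.trans htU⟩ ⟨(ht0.trans hz.1).le, hz.2⟩ ht0 hz.1
  | insert c Q hQc ih =>
    have hc : c ∈ Set.Ioo 0 t := hQt (mem_insert_self c Q)
    have hcQ : c ∉ Q := fun h => (hQc c h).false
    obtain ⟨a, σ, ha, hrep, hslope⟩ := ih hc.1 (hc.2.le.trans htU) fun x hx =>
      ⟨(hQt (mem_insert_of_mem hx)).1, hQc x hx⟩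
    set σ₁ := (g t - g c) / (t - c) with hσ₁
    have hsum : ∀ x, ∑ q ∈ insert c Q, Function.update a c (σ - σ₁) q * min x q
        = (σ - σ₁) * min x c + ∑ q ∈ Q, a q * min x q := by
      intro x
      rw [sum_insert hcQ, Function.update_self]
      congr 1
      refine sum_congr rfl fun q hq => ?_
      rw [Function.update_of_ne (ne_of_mem_of_not_mem hq hcQ)]
    refine ⟨Function.update a c (σ - σ₁), σ₁, fun q hq => ?_, fun x hx => ?_, fun z hz => ?_⟩
    · rcases mem_insert.mp hq with rfl | hq
      · simpa using hslope t ⟨hc.2, htU⟩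
      · rw [Function.update_of_ne (ne_of_mem_of_not_mem hq hcQ)]
        exact ha q hq
    · rw [hsum]
      rcases mem_insert.mp hx with rfl | hx
      · have hmin : ∀ q ∈ Q, min x q = min c q := fun q hq => by
          rw [min_eq_right (hQc q hq).le, min_eq_right (hQc q hq |>.trans hc.2).le]
        rw [sum_congr rfl fun q hq => by rw [hmin q hq], min_eq_right hc.2.le]
        have hgc := hrep c (mem_insert_self c Q)
        have hct : x - c ≠ 0 := sub_ne_zero.mpr hc.2.ne'
        rw [hσ₁]
        field_simp
        linear_combination (x - c) * hgc
      · have hxc : x ≤ c := by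
          rcases mem_insert.mp hx with rfl | hx
          exacts [le_rfl, (hQc x hx).le]
        rw [min_eq_left hxc, hrep x hx]
        ring
    · exact hg.slope_anti_adjacent ⟨hc.1.le, (hc.2.trans_le htU).le⟩
        ⟨(ht0.trans hz.1).le, hz.2⟩ hc.2 hz.1

theorem exists_tent_expansion {g : ℝ → ℝ} {T : ℝ} (hg : ConcaveOn ℝ (Set.Icc 0 T) g)
    (hg0 : g 0 = 0) (hgT : g T = 0) (Q : Finset ℝ) (hQ : (Q : Set ℝ) ⊆ Set.Ioo 0 T) :
    ∃ a : ℝ → ℝ, (∀ c ∈ Q, 0 ≤ a c) ∧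
      ∀ x ∈ insert 0 (insert T Q), g x = ∑ c ∈ Q, a c * min ((T - c) * x) (c * (T - x)) := by
  rcases Q.eq_empty_or_nonempty with rfl | ⟨c₀, hc₀⟩
  · exact ⟨0, by simp, by simp [hg0, hgT]⟩
  have hT : 0 < T := (hQ hc₀).1.trans (hQ hc₀).2
  obtain ⟨a, σ, ha, hrep, -⟩ := hg.exists_hinge_expansion Q hT le_rfl hQ
  replace hrep : ∀ x ∈ insert 0 (insert T Q), g x = g 0 + σ * x + ∑ c ∈ Q, a c * min x c := by
    intro x hx
    rcases mem_insert.mp hx with rfl | hx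
    · rw [mul_zero, add_zero, sum_eq_zero fun c hc => by rw [min_eq_left (hQ hc).1.le, mul_zero],
        add_zero]
    · exact hrep x hx
  have hσ : σ * T = -∑ c ∈ Q, a c * c := by
    have := hrep T (mem_insert_of_mem (mem_insert_self T Q))
    rw [hgT, hg0, sum_congr rfl fun c hc => by rw [min_eq_right (hQ hc).2.le]] at this
    linarith
  refine ⟨fun c => a c / T, fun c hc => div_nonneg (ha c hc) hT.le, fun x hx => ?_⟩
  have htent : ∀ c, min ((T - c) * x) (c * (T - x)) = T * min x c - c * x := fun c => by
    rw [mul_min_of_nonneg _ _ hT.le, ← min_sub_sub_right]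
    congr 1 <;> ring
  have hσ' : σ * x = -(∑ c ∈ Q, a c * c * x) / T := by
    rw [← sum_mul, eq_div_iff hT.ne']
    linear_combination x * hσ
  rw [sum_congr rfl fun c _ => by rw [htent c], hrep x hx, hg0, zero_add, hσ',
    ← sum_neg_distrib, sum_div, ← sum_add_distrib]
  refine sum_congr rfl fun c _ => ?_
  field_simp
  ring

end ConcaveOn

theorem Finset.sum_mem_Ioo_of_ssubset {V : Type*} {s t : Finset V} {γ : V → ℝ}
    (hγ : ∀ v ∈ t, 0 < γ v) (hs : s.Nonempty) (hst : s ⊂ t) :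
    ∑ v ∈ s, γ v ∈ Set.Ioo 0 (∑ v ∈ t, γ v) := by
  obtain ⟨v, hvt, hvs⟩ := exists_of_ssubset hst
  exact ⟨sum_pos (fun v hv => hγ v (hst.subset hv)) hs,
    sum_lt_sum_of_subset hst.subset hvt hvs (hγ v hvt) fun w hw _ => (hγ w hw).le⟩

theorem stmt12_general {V : Type*} [DecidableEq V] (e : Finset V) (γ : V → ℝ)
    (hγ : ∀ v ∈ e, 0 < γ v) (g : ℝ → ℝ)
    (hconc : ConcaveOn ℝ (Set.Icc 0 (∑ v ∈ e, γ v)) g)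
    (hg0 : g 0 = 0) (hgT : g (∑ v ∈ e, γ v) = 0) :
    let Q : Finset ℝ := ((e.powerset.filter fun S => S ≠ ∅ ∧ S ≠ e).image
      fun S => ∑ v ∈ S, γ v)
    ∃ b : Fin Q.card → ℝ, StrictMono b ∧ (∀ i, b i ∈ Q) ∧
      ∃ a : Fin Q.card → ℝ, (∀ i, 0 ≤ a i) ∧
        ∀ S ⊆ e, g (∑ v ∈ S, γ v) =
          ∑ i, a i * min (((∑ v ∈ e, γ v) - b i) * ∑ v ∈ S, γ v)
            (b i * ∑ v ∈ e \ S, γ v) := by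
  intro Q
  have hQ : (Q : Set ℝ) ⊆ Set.Ioo 0 (∑ v ∈ e, γ v) := by
    simp only [Q, coe_image, coe_filter, Set.image_subset_iff, mem_powerset]
    rintro S ⟨hSe, hS0, hSe'⟩
    exact sum_mem_Ioo_of_ssubset hγ (nonempty_iff_ne_empty.mpr hS0) (ssubset_of_subset_of_ne hSe hSe')
  obtain ⟨a, ha, hrep⟩ := hconc.exists_tent_expansion hg0 hgT Q hQ
  set b := Q.orderEmbOfFin rfl
  refine ⟨b, b.strictMono, Q.orderEmbOfFin_mem rfl, fun i => a (b i),
    fun i => ha _ (Q.orderEmbOfFin_mem rfl i), fun S hS => ?_⟩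
  have hmem : ∑ v ∈ S, γ v ∈ insert 0 (insert (∑ v ∈ e, γ v) Q) := by
    by_cases hS0 : S = ∅
    · simp [hS0]
    by_cases hSe : S = e
    · simp [hSe]
    refine mem_insert_of_mem (mem_insert_of_mem (mem_image_of_mem _ ?_))
    exact mem_filter.mpr ⟨mem_powerset.mpr hS, hS0, hSe⟩
  rw [sum_sdiff_eq_sub hS, hrep _ hmem]
  conv_lhs => rw [← Q.map_orderEmbOfFin_univ rfl, sum_map]
  rfl

theorem stmt12 {V : Type*} [DecidableEq V] (e : Finset V) (γ : V → ℝ)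
    (hγ : ∀ v ∈ e, 0 < γ v) (g : ℝ → ℝ)
    (hconc : ConcaveOn ℝ (Set.Icc 0 (∑ v ∈ e, γ v)) g)
    (hnn : ∀ x ∈ Set.Icc 0 (∑ v ∈ e, γ v), 0 ≤ g x)
    (hg0 : g 0 = 0) (hgT : g (∑ v ∈ e, γ v) = 0) :
    let Q : Finset ℝ := ((e.powerset.filter fun S => S ≠ ∅ ∧ S ≠ e).image
      fun S => ∑ v ∈ S, γ v)
    ∃ b : Fin Q.card → ℝ, StrictMono b ∧ (∀ i, b i ∈ Q) ∧
      ∃ a : Fin Q.card → ℝ, (∀ i, 0 ≤ a i) ∧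
        ∀ S ⊆ e, g (∑ v ∈ S, γ v) =
          ∑ i, a i * min (((∑ v ∈ e, γ v) - b i) * ∑ v ∈ S, γ v)
            (b i * ∑ v ∈ e \ S, γ v) :=
  stmt12_general e γ hγ g hconc hg0 hgT
end

section
/- Every gadget splitting function whose gadget is a single asymmetric EDVWs-based gadget, i.e., w(S) = min{a·γ(S), b·γ(e \ S)} with a, b > 0 and positive vertex weights γ, is submodular. -/
/-! The map `x ↦ min (a x) (b (T - x))` is concave, being a minimum of affine maps, so its
increments `f (x + c) - f x` decrease in `x` for `c ≥ 0`. With `T = γ(e)` the gadget is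
`w(S) = f (γ(S))`, and `S₁ ⊆ S₂` gives `γ(S₁) ≤ γ(S₂)` because the weights are positive;
adding `v` is an increment by `c = γ(v) > 0`. -/

open Set

theorem ConcaveOn.map_add_sub_map_le_of_le {𝕜 : Type*} [Field 𝕜] [LinearOrder 𝕜]
    [IsStrictOrderedRing 𝕜] {s : Set 𝕜} {f : 𝕜 → 𝕜} (hf : ConcaveOn 𝕜 s f) {x y c : 𝕜}
    (hx : x ∈ s) (hyc : y + c ∈ s) (hxy : x ≤ y) (hc : 0 ≤ c) :
    f (y + c) - f y ≤ f (x + c) - f x := by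
  rcases hc.eq_or_lt with rfl | hc
  · simp
  have mem : ∀ z ∈ Icc x (y + c), z ∈ s := fun z hz => hf.1.ordConnected.out hx hyc hz
  have hy : y ∈ s := mem y ⟨hxy, by linarith⟩
  have hxc : x + c ∈ s := mem (x + c) ⟨by linarith, by linarith⟩
  have h₁ : slope f x (y + c) ≤ slope f x (x + c) :=
    hf.antitoneOn_slope_gt hx ⟨hxc, by linarith⟩ ⟨hyc, by linarith⟩ (by linarith)
  have h₂ : slope f (y + c) y ≤ slope f (y + c) x :=
    hf.antitoneOn_slope_lt hyc ⟨hx, by linarith⟩ ⟨hy, by linarith⟩ hxy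
  rw [slope_comm f (y + c) x] at h₂
  have key := h₂.trans h₁
  rw [slope_comm, slope_def_field, slope_def_field, add_sub_cancel_left, add_sub_cancel_left]
    at key
  exact (div_le_div_iff_of_pos_right hc).1 key

theorem concaveOn_min_mul_mul_sub (a b T : ℝ) :
    ConcaveOn ℝ univ fun x => min (a * x) (b * (T - x)) :=
  (((LinearMap.mulLeft ℝ a).concaveOn convex_univ).inf
    (((LinearMap.mulLeft ℝ (-b)).concaveOn convex_univ).add_const (b * T))).congr
    fun x _ => by simp only [Pi.inf_apply, Pi.add_apply, LinearMap.mulLeft_apply]; ring_nf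

theorem stmt16_general {V : Type*} [DecidableEq V] (e : Finset V) (γ : V → ℝ)
    (hγ : ∀ v ∈ e, 0 < γ v) (a b : ℝ) :
    ∀ (S1 S2 : Finset V) (v : V), S1 ⊆ S2 → S2 ⊂ e → v ∈ e → v ∉ S2 →
      min (a * ∑ u ∈ insert v S2, γ u) (b * ∑ u ∈ e \ insert v S2, γ u) -
          min (a * ∑ u ∈ S2, γ u) (b * ∑ u ∈ e \ S2, γ u) ≤
        min (a * ∑ u ∈ insert v S1, γ u) (b * ∑ u ∈ e \ insert v S1, γ u) -
          min (a * ∑ u ∈ S1, γ u) (b * ∑ u ∈ e \ S1, γ u) := by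
  intro S1 S2 v h12 h2e hve hvS2
  have hS2e : S2 ⊆ e := h2e.subset
  have hvS1 : v ∉ S1 := fun h => hvS2 (h12 h)
  have hw : ∀ S ⊆ e, min (a * ∑ u ∈ S, γ u) (b * ∑ u ∈ e \ S, γ u) =
      min (a * ∑ u ∈ S, γ u) (b * (∑ u ∈ e, γ u - ∑ u ∈ S, γ u)) := fun S hS => by
    rw [Finset.sum_sdiff_eq_sub hS]
  rw [hw _ hS2e, hw _ (h12.trans hS2e), hw _ (Finset.insert_subset hve hS2e),
    hw _ (Finset.insert_subset hve (h12.trans hS2e)), Finset.sum_insert hvS2,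
    Finset.sum_insert hvS1, add_comm (γ v), add_comm (γ v)]
  have hγS : ∑ u ∈ S1, γ u ≤ ∑ u ∈ S2, γ u :=
    Finset.sum_le_sum_of_subset_of_nonneg h12 fun u hu _ => (hγ u (hS2e hu)).le
  exact (concaveOn_min_mul_mul_sub a b _).map_add_sub_map_le_of_le (mem_univ _) (mem_univ _)
    hγS (hγ v hve).le

theorem stmt16 {V : Type*} [DecidableEq V] (e : Finset V) (γ : V → ℝ)
    (hγ : ∀ v ∈ e, 0 < γ v) (a b : ℝ) (ha : 0 < a) (hb : 0 < b) :
    ∀ (S1 S2 : Finset V) (v : V), S1 ⊆ S2 → S2 ⊂ e → v ∈ e → v ∉ S2 →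
      min (a * ∑ u ∈ insert v S2, γ u) (b * ∑ u ∈ e \ insert v S2, γ u) -
          min (a * ∑ u ∈ S2, γ u) (b * ∑ u ∈ e \ S2, γ u) ≤
        min (a * ∑ u ∈ insert v S1, γ u) (b * ∑ u ∈ e \ insert v S1, γ u) -
          min (a * ∑ u ∈ S1, γ u) (b * ∑ u ∈ e \ S1, γ u) :=
  stmt16_general e γ hγ a b
end
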